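/- Let x ∈ ℝⁿ and suppose x' = Σ_{i=0}^{d} F_i x^{[i]} for matrices F_i ∈ ℝ^{n × nⁱ}. Then for every j ∈ ℕ, (x')^{[j]} = Σ_{k=0}^{jd} ( Σ_{(i_1,…,i_j) ∈ H_{j,k}} F_{i_1} ⊗ ⋯ ⊗ F_{i_j} ) x^{[k]}, where H_{j,k} = { (i_1,…,i_j) : Σ_{l=1}^j i_l = k and each i_l ≤ d }. -/

import Mathlib

/-- `k`-th Kronecker power of a vector `x ∈ ℝ^n`, indexed by multi-indices. -/
def vecPow {n : ℕ} (x : Fin n → ℝ) (k : ℕ) : (Fin k → Fin n) → ℝ :=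
  fun b => ∏ l, x (b l)

/-- Position of the `m2`-th coordinate of the `l`-th block in the concatenation of
blocks of sizes `idx 0, …, idx (j-1)` (total size `k`).  This realizes the canonical
bijection `Fin k ≃ Σ l, Fin (idx l)` underlying the Kronecker product layout. -/
def sigmaIdx {j k : ℕ} (idx : Fin j → ℕ) (h : (∑ l, idx l) = k) (l : Fin j)
    (m2 : Fin (idx l)) : Fin k :=
  ⟨(∑ l' ∈ Finset.univ.filter (fun l' => l' < l), idx l') + (m2 : ℕ), by
    have h1 : (m2 : ℕ) < idx l := m2.isLt
    have h2 : idx l + ∑ l' ∈ Finset.univ.filter (fun l' => l' < l), idx l' ≤ ∑ l', idx l' := by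
      rw [← Finset.sum_insert (by simp)]
      exact Finset.sum_le_sum_of_subset (Finset.subset_univ _)
    omega⟩

/-- The matrix `A_{j,k} = Σ_{(i_1,…,i_j) ∈ H_{j,k}} F_{i_1} ⊗ ⋯ ⊗ F_{i_j}`, where
`H_{j,k}` is the set of `j`-tuples with entries in `{0,…,d}` summing to `k`.
Rows are indexed by multi-indices in `(Fin j → Fin n)` (i.e. `ℝ^{n^j}`) and columns
by `(Fin k → Fin n)` (i.e. `ℝ^{n^k}`). -/
def Amat {n : ℕ} (d : ℕ) (F : (i : Fin (d+1)) → Matrix (Fin n) (Fin (i : ℕ) → Fin n) ℝ)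
    (j k : ℕ) : Matrix (Fin j → Fin n) (Fin k → Fin n) ℝ :=
  ∑ idx : Fin j → Fin (d+1),
    if h : (∑ l, ((idx l : ℕ))) = k then
      Matrix.of (fun a b =>
        ∏ l, F (idx l) (a l) (fun m2 => b (sigmaIdx (fun l' => ((idx l' : ℕ))) h l m2)))
    else 0

/-!
Expanding `∏ l, x' (a l)` with `x' = Σ_i F_i x^{[i]}` gives a sum over degree tuples
`(i_1, …, i_j)` of `∏ l, (F_{i_l} x^{[i_l]}) (a l)`. Cutting `Fin k`, `k = Σ i_l`, into consecutive
blocks of sizes `i_1, …, i_j` (Mathlib's `finSigmaFinEquiv`) identifies `x^{[k]}` with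
`x^{[i_1]} ⊗ ⋯ ⊗ x^{[i_j]}`, so by the mixed-product property each such term is
`((F_{i_1} ⊗ ⋯ ⊗ F_{i_j}) x^{[k]}) a`. Grouping the tuples by `k ≤ j d` yields `A_{j,k} x^{[k]}`.
-/

open Matrix

theorem Fin.sum_castLE_eq_sum_filter_lt {M : Type*} [AddCommMonoid M] {j : ℕ} (f : Fin j → M)
    (l : Fin j) :
    ∑ i : Fin l, f (Fin.castLE l.2.le i) = ∑ l' ∈ Finset.univ.filter (· < l), f l' := by
  apply Finset.sum_nbij (Fin.castLE l.2.le)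
  · exact fun i _ => Finset.mem_filter.mpr ⟨Finset.mem_univ _, i.2⟩
  · exact fun a _ b _ h => Fin.castLE_injective _ h
  · intro l' hl'
    simp only [Finset.coe_filter, Finset.mem_univ, true_and] at hl'
    exact ⟨⟨l', hl'⟩, by simp, rfl⟩
  · exact fun _ _ => rfl

section Blocks

variable {j k : ℕ} (idx : Fin j → ℕ) (h : ∑ l, idx l = k)

def sigmaIdxEquiv : (Σ l, Fin (idx l)) ≃ Fin k :=
  finSigmaFinEquiv.trans (finCongr h)

@[simp]
theorem sigmaIdxEquiv_apply (p : Σ l, Fin (idx l)) :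
    sigmaIdxEquiv idx h p = sigmaIdx idx h p.1 p.2 := by
  ext
  simp [sigmaIdxEquiv, sigmaIdx, Fin.sum_castLE_eq_sum_filter_lt]

def blockEquiv (α : Type*) : (Fin k → α) ≃ ((l : Fin j) → Fin (idx l) → α) :=
  ((sigmaIdxEquiv idx h).arrowCongr (Equiv.refl α)).symm.trans (Equiv.piCurry fun _ _ => α)

@[simp]
theorem blockEquiv_apply {α : Type*} (b : Fin k → α) (l : Fin j) :
    blockEquiv idx h α b l = fun m => b (sigmaIdx idx h l m) := by
  ext m
  simp [blockEquiv, Sigma.curry, Equiv.arrowCongr_apply]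

theorem vecPow_eq_prod_blocks {n : ℕ} (x : Fin n → ℝ) (b : Fin k → Fin n) :
    vecPow x k b = ∏ l, vecPow x (idx l) (blockEquiv idx h _ b l) := by
  rw [vecPow, ← (sigmaIdxEquiv idx h).prod_comp, ← Finset.univ_sigma_univ, Finset.prod_sigma]
  simp [vecPow]

end Blocks

/-- The Kronecker product `M 0 ⊗ ⋯ ⊗ M (j-1)`, its column multi-index cut into blocks by
`sigmaIdx`; `Amat` is a sum of these. -/
def kronProd {ι : Type*} {j n : ℕ} {idx : Fin j → ℕ}
    (M : (l : Fin j) → Matrix ι (Fin (idx l) → Fin n) ℝ) :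
    Matrix (Fin j → ι) (Fin (∑ l, idx l) → Fin n) ℝ :=
  Matrix.of fun a b => ∏ l, M l (a l) (fun m => b (sigmaIdx idx rfl l m))

theorem kronProd_mulVec_vecPow {ι : Type*} {j n : ℕ} {idx : Fin j → ℕ}
    (M : (l : Fin j) → Matrix ι (Fin (idx l) → Fin n) ℝ) (x : Fin n → ℝ) (a : Fin j → ι) :
    (kronProd M *ᵥ vecPow x (∑ l, idx l)) a = ∏ l, (M l *ᵥ vecPow x (idx l)) (a l) := by
  let e := blockEquiv idx rfl (Fin n)
  calc (kronProd M *ᵥ vecPow x (∑ l, idx l)) a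
      = ∑ b, ∏ l, M l (a l) (e b l) * vecPow x (idx l) (e b l) := by
        simp only [mulVec, dotProduct, kronProd, of_apply, vecPow_eq_prod_blocks idx rfl x,
          ← Finset.prod_mul_distrib, e, blockEquiv_apply]
    _ = ∑ c : (l : Fin j) → Fin (idx l) → Fin n, ∏ l, M l (a l) (c l) * vecPow x (idx l) (c l) :=
        e.sum_comp fun c => ∏ l, M l (a l) (c l) * vecPow x (idx l) (c l)
    _ = ∏ l, (M l *ᵥ vecPow x (idx l)) (a l) := by
        simp only [mulVec, dotProduct, Fintype.prod_sum]

section Amat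

variable {n d : ℕ} (F : (i : Fin (d+1)) → Matrix (Fin n) (Fin (i : ℕ) → Fin n) ℝ) (j : ℕ)

theorem Amat_mulVec (v : (k : ℕ) → (Fin k → Fin n) → ℝ) (k : ℕ) :
    Amat d F j k *ᵥ v k = ∑ idx : Fin j → Fin (d+1),
      if ∑ l, (idx l : ℕ) = k then kronProd (fun l => F (idx l)) *ᵥ v (∑ l, (idx l : ℕ)) else 0 := by
  rw [Amat, sum_mulVec]
  refine Finset.sum_congr rfl fun idx _ => ?_
  split_ifs with h
  · subst h
    rfl
  · exact zero_mulVec _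

theorem sum_val_lt_mul_add_one (idx : Fin j → Fin (d+1)) : ∑ l, (idx l : ℕ) < j * d + 1 := by
  have : ∑ l, (idx l : ℕ) ≤ ∑ _l : Fin j, d := Finset.sum_le_sum fun l _ => Fin.is_le (idx l)
  simp only [Finset.sum_const, Finset.card_univ, Fintype.card_fin, smul_eq_mul] at this
  omega

theorem sum_range_Amat_mulVec (v : (k : ℕ) → (Fin k → Fin n) → ℝ) :
    ∑ k ∈ Finset.range (j * d + 1), Amat d F j k *ᵥ v k
      = ∑ idx : Fin j → Fin (d+1), kronProd (fun l => F (idx l)) *ᵥ v (∑ l, (idx l : ℕ)) := by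
  simp_rw [Amat_mulVec]
  rw [Finset.sum_comm]
  refine Finset.sum_congr rfl fun idx _ => ?_
  rw [Finset.sum_ite_eq, if_pos (Finset.mem_range.mpr (sum_val_lt_mul_add_one j idx))]

end Amat

/-- If `x' = Σ_{i=0}^{d} F_i x^{[i]}`, then for every `j`,
`(x')^{[j]} = Σ_{k=0}^{jd} (Σ_{(i_1,…,i_j) ∈ H_{j,k}} F_{i_1} ⊗ ⋯ ⊗ F_{i_j}) x^{[k]}`. -/
theorem vecPow_of_polynomial_step {n d : ℕ} (x x' : Fin n → ℝ)
    (F : (i : Fin (d+1)) → Matrix (Fin n) (Fin (i : ℕ) → Fin n) ℝ)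
    (hx : x' = ∑ i : Fin (d+1), (F i).mulVec (vecPow x (i : ℕ)))
    (j : ℕ) :
    vecPow x' j = ∑ k ∈ Finset.range (j * d + 1), (Amat d F j k).mulVec (vecPow x k) := by
  subst hx
  funext a
  calc vecPow (∑ i, F i *ᵥ vecPow x i) j a
      = ∏ l, ∑ i, (F i *ᵥ vecPow x i) (a l) := by
        rw [vecPow]
        simp only [Finset.sum_apply]
    _ = ∑ idx : Fin j → Fin (d+1), ∏ l, (F (idx l) *ᵥ vecPow x (idx l)) (a l) :=
        Fintype.prod_sum _
    _ = ∑ idx : Fin j → Fin (d+1),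
          (kronProd (fun l => F (idx l)) *ᵥ vecPow x (∑ l, (idx l : ℕ))) a := by
        simp_rw [kronProd_mulVec_vecPow]
    _ = _ := by rw [sum_range_Amat_mulVec, Finset.sum_apply]
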